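/- Let V be a finite-dimensional complex vector space, T nilpotent, and x ∈ V nonzero with gap sequence gs(x) = {k_1 < ... < k_r} and value sequence vs(x) = {v_1 < ... < v_r} where v_i = v(T^{k_i} x). Then there exist T-consistent vectors a_1, ..., a_r ∈ V such that T^{v_i} a_i ∈ ker(T) for each i and x = T^{v_1 - k_1} a_1 + ... + T^{v_r - k_r} a_r. -/

import Mathlib

open Polynomial

variable {V : Type*} [AddCommGroup V] [Module ℂ V]

/-- The value `v(x)`: the largest `n` with `x ∈ T^n(V)`. -/
noncomputable def val (T : V →ₗ[ℂ] V) (x : V) : ℕ :=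
  sSup {n : ℕ | x ∈ LinearMap.range (T ^ n)}

/-- The value `v_U(x)` computed in a subspace `U`: the largest `n` with `x ∈ T^n(U)`. -/
noncomputable def valU (T : V →ₗ[ℂ] V) (U : Submodule ℂ V) (x : V) : ℕ :=
  sSup {n : ℕ | x ∈ Submodule.map (T ^ n) U}

/-- The height `ht(x)`: the least `n` with `T^n x = 0`. -/
noncomputable def ht (T : V →ₗ[ℂ] V) (x : V) : ℕ :=
  sInf {n : ℕ | (T ^ n) x = 0}

/-- The gap sequence of `x`. -/
noncomputable def gs (T : V →ₗ[ℂ] V) (x : V) : Set ℕ :=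
  {k | (T ^ (k + 1)) x ≠ 0 ∧ val T ((T ^ (k + 1)) x) > val T ((T ^ k) x) + 1}
    ∪ {ht T x - 1}

/-- The value sequence of `x`. -/
noncomputable def vs (T : V →ₗ[ℂ] V) (x : V) : Set ℕ :=
  (fun k => val T ((T ^ k) x)) '' gs T x

/-- The value-preserving property of a family of vectors, relative to a subspace `U`
(taking `U = ⊤` gives the value-preserving property in `V`). -/
def VP {ι : Type*} (T : V →ₗ[ℂ] V) (U : Submodule ℂ V) (x : ι → V) : Prop :=
  ∀ (s : Finset ι) (α : ι → ℂ) (hs : s.Nonempty), (∀ j ∈ s, α j ≠ 0) →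
    valU T U (∑ j ∈ s, α j • x j) = s.inf' hs (fun j => valU T U (x j))

/-- The triple `(V, T, U)` is indecomposable. -/
def Indecomposable (T : V →ₗ[ℂ] V) (U : Submodule ℂ V) : Prop :=
  ∀ V₁ V₂ : Submodule ℂ V, (∀ x ∈ V₁, T x ∈ V₁) → (∀ x ∈ V₂, T x ∈ V₂) →
    IsCompl V₁ V₂ → U = (U ⊓ V₁) ⊔ (U ⊓ V₂) → V₁ = ⊥ ∨ V₂ = ⊥

/-- `y` is `T`-consistent. -/
def TConsistent (T : V →ₗ[ℂ] V) (y : V) : Prop :=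
  ∀ k < ht T y, val T ((T ^ k) y) = val T y + k

/-- The cyclic invariant subspace generated by `x`. -/
noncomputable def cyc (T : V →ₗ[ℂ] V) (x : V) : Submodule ℂ V :=
  Submodule.span ℂ (Set.range fun k : ℕ => (T ^ k) x)

/-- The span `V(Y)` of the orbits of a family `y`. -/
noncomputable def VY (T : V →ₗ[ℂ] V) {r : ℕ} (y : Fin r → V) : Submodule ℂ V :=
  Submodule.span ℂ (⋃ i, (fun k => (T ^ k) (y i)) '' Set.Iio (ht T (y i)))

/-!
Let `K = k₁` be the first gap of `x` and `v = v(x)`. Below the first gap the values grow by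
exactly one, so `v(T^K x) = v + K`, and the gap sequence of `u = T^(K+1) x` is that of `x` with
`K` removed and shifted down by `K + 1`. By induction `u` decomposes, which produces `y` with
`T^(K+1) y = u` built from the remaining `a_i`; since every later gap has `v_i - k_i > v`,
`y ∈ T^(v+1)(V)`. Then `x - y = T^v a₁` for some `a₁` with `T^(v+K+1) a₁ = 0` whose top nonzero
iterate `T^(v+K) a₁` has value exactly `v + K`, and this forces `a₁` to be `T`-consistent.
-/

section Iterates

variable (T : V →ₗ[ℂ] V)

lemma pow_apply_pow_apply (a b : ℕ) (x : V) : (T ^ a) ((T ^ b) x) = (T ^ (a + b)) x := by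
  rw [← Module.End.mul_apply, ← pow_add]

lemma range_pow_le_range_pow {m n : ℕ} (h : m ≤ n) :
    LinearMap.range (T ^ n) ≤ LinearMap.range (T ^ m) := by
  rw [← Nat.add_sub_cancel' h, pow_add, Module.End.mul_eq_comp]
  exact LinearMap.range_comp_le_range _ (T ^ m)

lemma pow_apply_mem_range_pow {x : V} {n : ℕ} (j : ℕ) (h : x ∈ LinearMap.range (T ^ n)) :
    (T ^ j) x ∈ LinearMap.range (T ^ (n + j)) := by
  obtain ⟨w, rfl⟩ := h
  exact ⟨w, by rw [pow_apply_pow_apply, add_comm]⟩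

end Iterates

section Nilpotent

variable {T : V →ₗ[ℂ] V} (hT : IsNilpotent T)
include hT

lemma bddAbove_setOf_mem_range_pow {x : V} (hx : x ≠ 0) :
    BddAbove {n : ℕ | x ∈ LinearMap.range (T ^ n)} := by
  obtain ⟨N, hN⟩ := hT
  refine ⟨N, fun n ⟨w, hw⟩ => ?_⟩
  by_contra! hn
  rw [pow_eq_zero_of_le hn.le hN, LinearMap.zero_apply] at hw
  exact hx hw.symm

lemma mem_range_pow_val {x : V} (hx : x ≠ 0) : x ∈ LinearMap.range (T ^ val T x) :=
  Nat.sSup_mem (s := {n : ℕ | x ∈ LinearMap.range (T ^ n)}) ⟨0, x, by simp⟩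
    (bddAbove_setOf_mem_range_pow hT hx)

lemma le_val {x : V} (hx : x ≠ 0) {n : ℕ} (h : x ∈ LinearMap.range (T ^ n)) : n ≤ val T x :=
  le_csSup (bddAbove_setOf_mem_range_pow hT hx) h

lemma val_le_of_notMem_range_pow_succ {x : V} {n : ℕ}
    (h : x ∉ LinearMap.range (T ^ (n + 1))) : val T x ≤ n := by
  have hx : x ≠ 0 := by rintro rfl; exact h (Submodule.zero_mem _)
  by_contra! hn
  exact h (range_pow_le_range_pow T hn (mem_range_pow_val hT hx))

lemma val_add_le_val_pow_apply {x : V} {j : ℕ} (h : (T ^ j) x ≠ 0) :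
    val T x + j ≤ val T ((T ^ j) x) := by
  have hx : x ≠ 0 := by rintro rfl; exact h (map_zero _)
  exact le_val hT h (pow_apply_mem_range_pow T j (mem_range_pow_val hT hx))

lemma pow_apply_eq_zero_iff {x : V} {m : ℕ} : (T ^ m) x = 0 ↔ ht T x ≤ m := by
  refine ⟨fun h => Nat.sInf_le h, fun h => ?_⟩
  obtain ⟨N, hN⟩ := hT
  have hht : (T ^ ht T x) x = 0 := Nat.sInf_mem (s := {n | (T ^ n) x = 0}) ⟨N, by simp [hN]⟩
  rw [← Nat.sub_add_cancel h, ← pow_apply_pow_apply, hht, map_zero]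

lemma ht_pow_apply (x : V) (m : ℕ) : ht T ((T ^ m) x) = ht T x - m := by
  refine le_antisymm ?_ ?_
  · rw [← pow_apply_eq_zero_iff hT, pow_apply_pow_apply, pow_apply_eq_zero_iff hT]
    omega
  · have h := (pow_apply_eq_zero_iff hT (m := ht T ((T ^ m) x))).2 le_rfl
    rw [pow_apply_pow_apply, pow_apply_eq_zero_iff hT] at h
    omega

/-- Consistency only has to be checked at the last nonzero iterate: the values of the iterates of
`a` grow by at least one at each step, and `v(T^n a) ≥ n` always. -/
lemma tConsistent_of_pow_apply_notMem_range {a : V} {n : ℕ} (hzero : (T ^ (n + 1)) a = 0)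
    (htop : (T ^ n) a ∉ LinearMap.range (T ^ (n + 1))) : TConsistent T a := by
  have hne : (T ^ n) a ≠ 0 := by intro h; exact htop (h ▸ Submodule.zero_mem _)
  have hht : ht T a = n + 1 := by
    have := (pow_apply_eq_zero_iff hT).1 hzero
    have := mt (pow_apply_eq_zero_iff hT).2 hne
    omega
  intro j hj
  have hjn : j ≤ n := by omega
  have hj_ne : (T ^ j) a ≠ 0 := mt (pow_apply_eq_zero_iff hT).1 (by omega)
  have hlow := val_add_le_val_pow_apply hT hj_ne
  have hhigh := val_add_le_val_pow_apply hT (x := (T ^ j) a) (j := n - j)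
    (by rwa [pow_apply_pow_apply, Nat.sub_add_cancel hjn])
  rw [pow_apply_pow_apply, Nat.sub_add_cancel hjn] at hhigh
  have hj_le := le_val hT hj_ne ⟨a, rfl⟩
  have hn_ge := val_le_of_notMem_range_pow_succ hT htop
  omega

lemma exists_tConsistent_pow_val_eq_sub {x y : V} {K : ℕ} (hK : K < ht T x)
    (hval : val T ((T ^ K) x) = val T x + K) (hy : y ∈ LinearMap.range (T ^ (val T x + 1)))
    (hxy : (T ^ (K + 1)) x = (T ^ (K + 1)) y) :
    ∃ a, TConsistent T a ∧ (T ^ (val T x + K + 1)) a = 0 ∧ (T ^ val T x) a = x - y := by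
  have hxK : (T ^ K) x ≠ 0 := mt (pow_apply_eq_zero_iff hT).1 (by omega)
  have hx : x ≠ 0 := by rintro rfl; exact hxK (map_zero _)
  have hxK_notMem : (T ^ K) x ∉ LinearMap.range (T ^ (val T x + K + 1)) := fun h => by
    have := le_val hT hxK h
    omega
  have hyK : (T ^ K) y ∈ LinearMap.range (T ^ (val T x + K + 1)) := by
    simpa [add_right_comm] using pow_apply_mem_range_pow T K hy
  obtain ⟨a, ha⟩ : x - y ∈ LinearMap.range (T ^ val T x) :=
    Submodule.sub_mem _ (mem_range_pow_val hT hx) (range_pow_le_range_pow T (by omega) hy)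
  have hpow : ∀ j, (T ^ (val T x + j)) a = (T ^ j) (x - y) := fun j => by
    rw [← ha, pow_apply_pow_apply, add_comm]
  have hzero : (T ^ (val T x + K + 1)) a = 0 := by
    rw [add_assoc, hpow, map_sub, hxy, sub_self]
  refine ⟨a, tConsistent_of_pow_apply_notMem_range hT hzero ?_, hzero, ha⟩
  rw [hpow, map_sub]
  exact fun h => hxK_notMem (by simpa using Submodule.add_mem _ h hyK)

end Nilpotent

lemma ht_sub_one_mem_gs (T : V →ₗ[ℂ] V) (x : V) : ht T x - 1 ∈ gs T x :=
  Set.mem_union_right _ rfl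

section Gaps

variable {T : V →ₗ[ℂ] V} (hT : IsNilpotent T)
include hT

lemma lt_ht_of_mem_gs {x : V} (hx : x ≠ 0) {c : ℕ} (hc : c ∈ gs T x) : c < ht T x := by
  have hht : ¬ ht T x ≤ 0 := fun h => hx (by simpa using (pow_apply_eq_zero_iff hT).2 h)
  rcases hc with ⟨hne, -⟩ | hc
  · have := mt (pow_apply_eq_zero_iff hT).2 hne
    omega
  · rw [Set.mem_singleton_iff.1 hc]
    omega

lemma gs_pow_apply (x : V) {m : ℕ} (hm : m < ht T x) :
    gs T ((T ^ m) x) = {c | c + m ∈ gs T x} := by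
  ext c
  simp only [gs, Set.mem_union, Set.mem_ofPred_eq, Set.mem_singleton_iff, pow_apply_pow_apply,
    ht_pow_apply hT, add_right_comm c 1 m]
  exact or_congr_right (by omega)

lemma val_pow_apply_of_forall_lt_notMem_gs {x : V} {K : ℕ} (hK : K < ht T x)
    (h : ∀ j < K, j ∉ gs T x) : val T ((T ^ K) x) = val T x + K := by
  induction K with
  | zero => simp
  | succ K ih =>
    have hne : (T ^ (K + 1)) x ≠ 0 := mt (pow_apply_eq_zero_iff hT).1 (by omega)
    have hno_gap : ¬ val T ((T ^ (K + 1)) x) > val T ((T ^ K) x) + 1 :=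
      fun hgt => h K (by omega) (Or.inl ⟨hne, hgt⟩)
    have hstep := val_add_le_val_pow_apply hT (x := (T ^ K) x) (j := 1)
      (by rwa [pow_apply_pow_apply, add_comm])
    rw [pow_apply_pow_apply, add_comm 1] at hstep
    have := ih (by omega) fun j hj => h j (by omega)
    omega

lemma val_pow_apply_add_lt_of_mem_gs {x : V} {K c : ℕ} (hK : K ∈ gs T x) (hKc : K < c)
    (hc : c < ht T x) : val T ((T ^ K) x) + (c - K) < val T ((T ^ c) x) := by
  obtain ⟨-, hgap⟩ : (T ^ (K + 1)) x ≠ 0 ∧ val T ((T ^ (K + 1)) x) > val T ((T ^ K) x) + 1 := by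
    refine hK.resolve_right fun hK' => ?_
    rw [Set.mem_singleton_iff.1 hK'] at hKc
    omega
  have hrest := val_add_le_val_pow_apply hT (x := (T ^ (K + 1)) x) (j := c - (K + 1))
    (by rw [pow_apply_pow_apply, Nat.sub_add_cancel hKc]
        exact mt (pow_apply_eq_zero_iff hT).1 (by omega))
  rw [pow_apply_pow_apply, Nat.sub_add_cancel hKc] at hrest
  omega

lemma gs_pow_apply_eq_range_tail {x : V} {r : ℕ} {k : Fin (r + 1) → ℕ} (hk : StrictMono k)
    (hgs : gs T x = Set.range k) (h : k 0 + 1 < ht T x) :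
    gs T ((T ^ (k 0 + 1)) x) = Set.range fun j : Fin r => k j.succ - (k 0 + 1) := by
  rw [gs_pow_apply hT x h, hgs]
  ext c
  constructor
  · rintro ⟨i, hi⟩
    cases i using Fin.cases with
    | zero => omega
    | succ j => exact ⟨j, show k j.succ - (k 0 + 1) = c by omega⟩
  · rintro ⟨j, rfl⟩
    have := hk (Fin.succ_pos j)
    exact ⟨j.succ, show k j.succ = k j.succ - (k 0 + 1) + (k 0 + 1) by omega⟩

end Gaps

def IsGapDecomposition (T : V →ₗ[ℂ] V) (x : V) {r : ℕ} (k : Fin r → ℕ) (a : Fin r → V) :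
    Prop :=
  (∀ i, TConsistent T (a i)) ∧ (∀ i, (T ^ (val T ((T ^ (k i)) x))) (a i) ∈ LinearMap.ker T) ∧
    x = ∑ i, (T ^ (val T ((T ^ (k i)) x) - k i)) (a i)

section Decomposition

variable {T : V →ₗ[ℂ] V} (hT : IsNilpotent T)
include hT

lemma IsGapDecomposition.cons {x : V} {r : ℕ} {k : Fin (r + 1) → ℕ} (hk : StrictMono k)
    {a' : Fin r → V} (hK : k 0 < ht T x) (hval : val T ((T ^ k 0) x) = val T x + k 0)
    (hgap : ∀ j : Fin r, val T x + k j.succ < val T ((T ^ k j.succ) x))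
    (ha' : IsGapDecomposition T ((T ^ (k 0 + 1)) x) (fun j => k j.succ - (k 0 + 1)) a') :
    ∃ a₁, IsGapDecomposition T x k (Fin.cons a₁ a') := by
  obtain ⟨hcons, hker, hsum⟩ := ha'
  have hshift (j : Fin r) :
      (T ^ (k j.succ - (k 0 + 1))) ((T ^ (k 0 + 1)) x) = (T ^ k j.succ) x := by
    rw [pow_apply_pow_apply, Nat.sub_add_cancel (hk (Fin.succ_pos j))]
  simp only [hshift] at hker hsum
  obtain ⟨a₁, hc₁, hzero, hsub⟩ := exists_tConsistent_pow_val_eq_sub hT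
    (y := ∑ j, (T ^ (val T ((T ^ k j.succ) x) - k j.succ)) (a' j)) hK hval
    (Submodule.sum_mem _ fun j _ =>
      range_pow_le_range_pow T (by have := hgap j; omega) ⟨a' j, rfl⟩)
    (by
      rw [hsum, map_sum]
      refine Finset.sum_congr rfl fun j _ => ?_
      rw [pow_apply_pow_apply]
      have := hgap j
      have := hk (Fin.succ_pos j)
      congr 2
      omega)
  refine ⟨a₁, fun i => ?_, fun i => ?_, ?_⟩
  · cases i using Fin.cases with
    | zero => exact hc₁
    | succ j => exact hcons j
  · cases i using Fin.cases with
    | zero =>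
      rw [Fin.cons_zero, LinearMap.mem_ker, hval, ← Module.End.mul_apply, ← pow_succ']
      exact hzero
    | succ j => exact hker j
  · rw [Fin.sum_univ_succ, Fin.cons_zero, hval, Nat.add_sub_cancel, hsub]
    simp only [Fin.cons_succ]
    rw [sub_add_cancel]

theorem exists_isGapDecomposition (r : ℕ) :
    ∀ x : V, x ≠ 0 → ∀ k : Fin r → ℕ, StrictMono k → gs T x = Set.range k →
      ∃ a, IsGapDecomposition T x k a := by
  induction r with
  | zero =>
    intro x _ k _ hgs
    obtain ⟨i, -⟩ := hgs ▸ ht_sub_one_mem_gs T x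
    exact i.elim0
  | succ r ih =>
    intro x hx k hk hgs
    have hmem (i : Fin (r + 1)) : k i ∈ gs T x := hgs ▸ Set.mem_range_self i
    have hK := lt_ht_of_mem_gs hT hx (hmem 0)
    have hval := val_pow_apply_of_forall_lt_notMem_gs hT hK fun j hj hj' => by
      obtain ⟨i, rfl⟩ := hgs ▸ hj'
      exact absurd (hk.monotone (Fin.zero_le i)) (by omega)
    have hgap (j : Fin r) : val T x + k j.succ < val T ((T ^ k j.succ) x) := by
      have := val_pow_apply_add_lt_of_mem_gs hT (hmem 0) (hk (Fin.succ_pos j))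
        (lt_ht_of_mem_gs hT hx (hmem j.succ))
      omega
    obtain ⟨a', ha'⟩ : ∃ a', IsGapDecomposition T ((T ^ (k 0 + 1)) x)
        (fun j => k j.succ - (k 0 + 1)) a' := by
      rcases Nat.lt_or_ge (k 0 + 1) (ht T x) with hlt | hge
      · refine ih _ (mt (pow_apply_eq_zero_iff hT).1 (by omega)) _ (fun i j hij => ?_)
          (gs_pow_apply_eq_range_tail hT hk hgs hlt)
        have := hk (Fin.succ_lt_succ_iff.2 hij)
        have := hk (Fin.succ_pos i)
        omega
      · obtain rfl : r = 0 := by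
          by_contra hr
          have := lt_ht_of_mem_gs hT hx (hmem (Fin.succ ⟨0, by omega⟩))
          have := hk (Fin.succ_pos (⟨0, by omega⟩ : Fin r))
          omega
        exact ⟨Fin.elim0, fun i => i.elim0, fun i => i.elim0,
          by simpa using (pow_apply_eq_zero_iff hT).2 hge⟩
    obtain ⟨a₁, ha⟩ := ha'.cons hT hk hK hval hgap
    exact ⟨_, ha⟩

end Decomposition

theorem stmt14_general (T : V →ₗ[ℂ] V) (hT : IsNilpotent T)
    (x : V) (hx : x ≠ 0) (r : ℕ) (k : Fin r → ℕ) (hk : StrictMono k)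
    (hgs : gs T x = Set.range k) :
    ∃ a : Fin r → V, (∀ i, TConsistent T (a i)) ∧
      (∀ i, (T ^ (val T ((T ^ (k i)) x))) (a i) ∈ LinearMap.ker T) ∧
      x = ∑ i, (T ^ (val T ((T ^ (k i)) x) - k i)) (a i) :=
  exists_isGapDecomposition hT r x hx k hk hgs

theorem stmt14 [FiniteDimensional ℂ V] (T : V →ₗ[ℂ] V) (hT : IsNilpotent T)
    (x : V) (hx : x ≠ 0) (r : ℕ) (k : Fin r → ℕ) (hk : StrictMono k)
    (hgs : gs T x = Set.range k) :
    ∃ a : Fin r → V, (∀ i, TConsistent T (a i)) ∧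
      (∀ i, (T ^ (val T ((T ^ (k i)) x))) (a i) ∈ LinearMap.ker T) ∧
      x = ∑ i, (T ^ (val T ((T ^ (k i)) x) - k i)) (a i) :=
  stmt14_general T hT x hx r k hk hgs
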